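/- arXiv:1610.07094 — 7 statements merged into one kernel-verified Lean document; each statement's English description precedes it below -/
import Mathlib

section
/- For positive parameters $r_1 > r_2 > 0$, $e, m, q_1, q_2, a_q, k > 0$, the point $(\tilde p_1, \tilde p_2, \tilde z)$ with $\tilde p_1 = \frac{a_q m (r_1+r_2) + e q_2 r_2 \operatorname{artanh}((r_1-r_2)/(r_1+r_2))/k}{e(q_1 a_q r_1 + q_2 r_2)}$, $\tilde p_2 = \frac{m(r_1+r_2) - e q_1 r_1 \operatorname{artanh}((r_1-r_2)/(r_1+r_2))/k}{e(q_1 a_q r_1 + q_2 r_2)}$, $\tilde z = r_1 + r_2$ satisfies the steady-state system $\tilde z (1 + \tanh(k(\tilde p_1 - a_q \tilde p_2)))/2 = r_1$, $\tilde z (1 - \tanh(k(\tilde p_1 - a_q \tilde p_2)))/2 = r_2$, and $(e q_1 \tilde p_1 - m) r_1 + (e q_2 \tilde p_2 - m) r_2 = 0$. -/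
noncomputable def artanh (x : ℝ) : ℝ := (1/2) * Real.log ((1+x)/(1-x))

/-! The choice of `p̃₁, p̃₂` makes `k (p̃₁ - a_q p̃₂)` collapse to `artanh ((r₁ - r₂)/(r₁ + r₂))`, so
the switching function equals `(r₁ - r₂)/(r₁ + r₂)` and splits `z̃ = r₁ + r₂` into `r₁` and `r₂`.
The predator balance is then a linear identity in which the `artanh` terms cancel. -/

theorem artanh_eq_real_artanh {x : ℝ} (hx : x ∈ Set.Icc (-1) 1) :
    artanh x = Real.artanh x :=
  (Real.artanh_eq_half_log hx).symm

theorem tanh_artanh {x : ℝ} (hx : x ∈ Set.Ioo (-1) 1) : Real.tanh (artanh x) = x := by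
  rw [artanh_eq_real_artanh (Set.Ioo_subset_Icc_self hx), Real.tanh_artanh hx]

theorem sub_div_add_mem_Ioo {a b : ℝ} (ha : 0 < a) (hb : 0 < b) :
    (a - b) / (a + b) ∈ Set.Ioo (-1) 1 := by
  have hab : 0 < a + b := add_pos ha hb
  constructor
  · rw [lt_div_iff₀ hab]; linarith
  · rw [div_lt_one hab]; linarith

section SteadyState

variable {r1 r2 e m q1 q2 aq k : ℝ}

theorem steadyState_tanh_arg (A : ℝ) (hk : k ≠ 0) (hD : e * (q1*aq*r1 + q2*r2) ≠ 0) :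
    k * ((aq*m*(r1+r2) + e*q2*r2*A/k) / (e*(q1*aq*r1 + q2*r2))
      - aq * ((m*(r1+r2) - e*q1*r1*A/k) / (e*(q1*aq*r1 + q2*r2)))) = A := by
  rw [mul_div_assoc', ← sub_div, mul_div_assoc', div_eq_iff hD]
  field_simp
  ring

theorem steadyState_balance (A : ℝ) (hk : k ≠ 0) (hD : e * (q1*aq*r1 + q2*r2) ≠ 0) :
    (e*q1*((aq*m*(r1+r2) + e*q2*r2*A/k) / (e*(q1*aq*r1 + q2*r2))) - m)*r1
      + (e*q2*((m*(r1+r2) - e*q1*r1*A/k) / (e*(q1*aq*r1 + q2*r2))) - m)*r2 = 0 := by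
  rw [mul_div_assoc', mul_div_assoc', div_sub' hD, div_sub' hD, div_mul_eq_mul_div,
    div_mul_eq_mul_div, ← add_div, div_eq_zero_iff]
  left
  field_simp
  ring

end SteadyState

theorem stmt0_general (r1 r2 e m q1 q2 aq k : ℝ)
    (hr : r1 > r2) (hr2 : r2 > 0) (he : e > 0)
    (hq1 : q1 > 0) (hq2 : q2 > 0) (haq : aq > 0) (hk : k > 0) :
    let p1 := (aq*m*(r1+r2) + e*q2*r2*artanh ((r1-r2)/(r1+r2))/k) / (e*(q1*aq*r1 + q2*r2))
    let p2 := (m*(r1+r2) - e*q1*r1*artanh ((r1-r2)/(r1+r2))/k) / (e*(q1*aq*r1 + q2*r2))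
    let z := r1 + r2
    z * (1 + Real.tanh (k*(p1 - aq*p2))) / 2 = r1 ∧
    z * (1 - Real.tanh (k*(p1 - aq*p2))) / 2 = r2 ∧
    (e*q1*p1 - m)*r1 + (e*q2*p2 - m)*r2 = 0 := by
  intro p1 p2 z
  have hr1 : 0 < r1 := hr2.trans hr
  have hD : e * (q1*aq*r1 + q2*r2) ≠ 0 := by positivity
  have htanh : Real.tanh (k*(p1 - aq*p2)) = (r1-r2)/(r1+r2) := by
    rw [steadyState_tanh_arg _ hk.ne' hD, tanh_artanh (sub_div_add_mem_Ioo hr1 hr2)]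
  refine ⟨?_, ?_, steadyState_balance _ hk.ne' hD⟩
  · rw [htanh]; field_simp; ring
  · rw [htanh]; field_simp; ring

theorem stmt0 (r1 r2 e m q1 q2 aq k : ℝ)
    (hr : r1 > r2) (hr2 : r2 > 0) (he : e > 0) (hm : m > 0)
    (hq1 : q1 > 0) (hq2 : q2 > 0) (haq : aq > 0) (hk : k > 0) :
    let p1 := (aq*m*(r1+r2) + e*q2*r2*artanh ((r1-r2)/(r1+r2))/k) / (e*(q1*aq*r1 + q2*r2))
    let p2 := (m*(r1+r2) - e*q1*r1*artanh ((r1-r2)/(r1+r2))/k) / (e*(q1*aq*r1 + q2*r2))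
    let z := r1 + r2
    z * (1 + Real.tanh (k*(p1 - aq*p2))) / 2 = r1 ∧
    z * (1 - Real.tanh (k*(p1 - aq*p2))) / 2 = r2 ∧
    (e*q1*p1 - m)*r1 + (e*q2*p2 - m)*r2 = 0 :=
  stmt0_general r1 r2 e m q1 q2 aq k hr hr2 he hq1 hq2 haq hk
end

section
/- Let $r_1 > r_2 > 0$ and $e, m, q_1, q_2, a_q > 0$, and define $k_0 = \frac{e q_1 r_1 \operatorname{artanh}((r_1-r_2)/(r_1+r_2))}{m(r_1+r_2)}$. Then the coexistence steady state of smooth model I has all three coordinates strictly positive if and only if $k > k_0$. -/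
theorem stmt1 (r1 r2 e m q1 q2 aq k : ℝ)
    (hr : r1 > r2) (hr2 : r2 > 0) (he : e > 0) (hm : m > 0)
    (hq1 : q1 > 0) (hq2 : q2 > 0) (haq : aq > 0) (hk : k > 0) :
    let k0 := e*q1*r1*artanh ((r1-r2)/(r1+r2)) / (m*(r1+r2))
    let p1 := (aq*m*(r1+r2) + e*q2*r2*artanh ((r1-r2)/(r1+r2))/k) / (e*(q1*aq*r1 + q2*r2))
    let p2 := (m*(r1+r2) - e*q1*r1*artanh ((r1-r2)/(r1+r2))/k) / (e*(q1*aq*r1 + q2*r2))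
    let z := r1 + r2
    (p1 > 0 ∧ p2 > 0 ∧ z > 0) ↔ k > k0 := by
  intro k0 p1 p2 z
  have hr1 : r1 > 0 := lt_trans hr2 hr
  have hs : r1 + r2 > 0 := by linarith
  have hA : artanh ((r1-r2)/(r1+r2)) > 0 := by
    have hx : (r1-r2)/(r1+r2) > 0 := div_pos (by linarith) hs
    have hx1 : (r1-r2)/(r1+r2) < 1 := (div_lt_one hs).mpr (by linarith)
    have : (1 + (r1-r2)/(r1+r2)) / (1 - (r1-r2)/(r1+r2)) > 1 := by
      rw [gt_iff_lt, lt_div_iff₀ (by linarith)]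
      linarith
    have := Real.log_pos this
    unfold artanh
    positivity
  have hden : e*(q1*aq*r1 + q2*r2) > 0 := by positivity
  have hp1 : p1 > 0 := by
    apply div_pos _ hden
    have h2 : e*q2*r2*artanh ((r1-r2)/(r1+r2))/k > 0 := by positivity
    have h3 : aq*m*(r1+r2) > 0 := by positivity
    linarith
  have hz : z > 0 := hs
  constructor
  · rintro ⟨-, hp2, -⟩
    have hnum : m*(r1+r2) - e*q1*r1*artanh ((r1-r2)/(r1+r2))/k > 0 := by
      by_contra h
      push_neg at h
      have : p2 ≤ 0 := div_nonpos_of_nonpos_of_nonneg (by linarith) hden.le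
      linarith
    show k > e*q1*r1*artanh ((r1-r2)/(r1+r2)) / (m*(r1+r2))
    rw [gt_iff_lt, div_lt_iff₀ (by positivity)]
    rw [gt_iff_lt, sub_pos, div_lt_iff₀ hk] at hnum
    nlinarith
  · intro hkk
    refine ⟨hp1, ?_, hz⟩
    have hkk' : e*q1*r1*artanh ((r1-r2)/(r1+r2)) / (m*(r1+r2)) < k := hkk
    rw [div_lt_iff₀ (by positivity)] at hkk'
    apply div_pos _ hden
    rw [sub_pos, div_lt_iff₀ hk]
    nlinarith
end

section
/- Let $r_1 > r_2 > 0$ and $e, m, q_1, q_2, a_q > 0$, and define $s(k) = s_2 k^2 + s_1 k + s_0$ with $s_0 = \tfrac12 e^2 q_1 q_2 r_1 r_2 L [2 a_q q_1 r_1 + 2 q_2 r_2 + (q_2 r_2 - a_q q_1 r_1) L]$, $s_1 = e m [(r_1+r_2)(a_q^2 q_1^2 r_1^2 - q_2^2 r_2^2) - r_1 r_2 (a_q^2 q_1^2 r_1 + q_2^2 r_2 - 3 a_q q_1 q_2 (r_1+r_2)) L]$, $s_2 = 4 a_q m^2 (a_q q_1 - q_2) r_1 r_2 (r_1+r_2)$,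 where $L = \log(r_1/r_2) > 0$. Then $s(k_0) = \frac{e^2 q_1 r_1 (a_q q_1 r_1 + q_2 r_2)^2 L [r_1 + r_2 + r_2 L]}{2(r_1+r_2)} > 0$, where $k_0 = \frac{e q_1 r_1 L}{2 m (r_1+r_2)}$. -/
theorem stmt5 (r1 r2 e m q1 q2 aq : ℝ)
    (hr : r1 > r2) (hr2 : r2 > 0) (he : e > 0) (hm : m > 0)
    (hq1 : q1 > 0) (hq2 : q2 > 0) (haq : aq > 0) :
    let L := Real.log (r1/r2)
    let s0 := (1/2) * e^2*q1*q2*r1*r2*L*(2*aq*q1*r1 + 2*q2*r2 + (q2*r2 - aq*q1*r1)*L)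
    let s1 := e*m*((r1+r2)*(aq^2*q1^2*r1^2 - q2^2*r2^2)
      - r1*r2*(aq^2*q1^2*r1 + q2^2*r2 - 3*aq*q1*q2*(r1+r2))*L)
    let s2 := 4*aq*m^2*(aq*q1 - q2)*r1*r2*(r1+r2)
    let k0 := e*q1*r1*L / (2*m*(r1+r2))
    0 < L ∧
    s2*k0^2 + s1*k0 + s0 =
      e^2*q1*r1*(aq*q1*r1 + q2*r2)^2*L*(r1 + r2 + r2*L) / (2*(r1+r2)) ∧
    0 < s2*k0^2 + s1*k0 + s0 := by
  intro L s0 s1 s2 k0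
  have hr1 : (0:ℝ) < r1 := lt_trans hr2 hr
  have hL : 0 < L := Real.log_pos (by rw [lt_div_iff₀ hr2]; linarith)
  have hsum : (0:ℝ) < r1 + r2 := by linarith
  have heq : s2*k0^2 + s1*k0 + s0 =
      e^2*q1*r1*(aq*q1*r1 + q2*r2)^2*L*(r1 + r2 + r2*L) / (2*(r1+r2)) := by
    simp only [s0, s1, s2, k0]
    field_simp
    ring
  refine ⟨hL, heq, ?_⟩
  rw [heq]
  have h1 : (0:ℝ) < aq*q1*r1 + q2*r2 := by positivity
  positivity
end

section
/- Let $r_1 > r_2 > 0$ and $e, m, q_1, q_2, a_q > 0$ with $a_q q_1 \geq q_2$, and let $s(k)$, $k_0$, and $L = \log(r_1/r_2)$ be as above. Then $s'(k_0) = e m (a_q q_1 r_1 + q_2 r_2)[(r_1+r_2)(a_q q_1 r_1 - q_2 r_2) + (3 a_q q_1 - q_2) r_1 r_2 L] > 0$. -/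
/-! The derivative of a quadratic at `k₀` is `2 s₂ k₀ + s₁`; substituting `k₀` and clearing the
denominator `m (r₁ + r₂)` factors it as stated. Both factors are positive: `a_q q₁ ≥ q₂` and
`r₁ > r₂` give `a_q q₁ r₁ > q₂ r₂` and `3 a_q q₁ > q₂`, and `L = log (r₁/r₂) > 0`. -/

theorem deriv_quadratic (a b c x : ℝ) :
    deriv (fun k => a * k ^ 2 + b * k + c) x = 2 * a * x + b := by
  have h : HasDerivAt (fun k => a * k ^ 2 + b * k + c) (a * (2 * x) + b) x := by
    simpa using (((hasDerivAt_pow 2 x).const_mul a).add ((hasDerivAt_id x).const_mul b)).add_const c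
  rw [h.deriv]
  ring

theorem slope_at_k0_eq (r1 r2 e m q1 q2 aq L : ℝ) (hm : m ≠ 0) (hsum : r1 + r2 ≠ 0) :
    2 * (4*aq*m^2*(aq*q1 - q2)*r1*r2*(r1+r2)) * (e*q1*r1*L / (2*m*(r1+r2)))
      + e*m*((r1+r2)*(aq^2*q1^2*r1^2 - q2^2*r2^2)
        - r1*r2*(aq^2*q1^2*r1 + q2^2*r2 - 3*aq*q1*q2*(r1+r2))*L) =
      e*m*(aq*q1*r1 + q2*r2)*((r1+r2)*(aq*q1*r1 - q2*r2) + (3*aq*q1 - q2)*r1*r2*L) := by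
  field_simp
  ring

theorem slope_at_k0_pos (r1 r2 e m q1 q2 aq L : ℝ)
    (hr : r1 > r2) (hr2 : r2 > 0) (he : e > 0) (hm : m > 0)
    (hq1 : q1 > 0) (hq2 : q2 > 0) (haq : aq > 0) (htrade : aq*q1 ≥ q2) (hL : L > 0) :
    0 < e*m*(aq*q1*r1 + q2*r2)*((r1+r2)*(aq*q1*r1 - q2*r2) + (3*aq*q1 - q2)*r1*r2*L) := by
  have hr1 : r1 > 0 := hr2.trans hr
  have hq1r : aq*q1*r1 - q2*r2 > 0 := by nlinarith [mul_pos haq hq1]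
  have hq1q2 : 3*aq*q1 - q2 > 0 := by nlinarith [mul_pos haq hq1]
  positivity

theorem stmt6 (r1 r2 e m q1 q2 aq : ℝ)
    (hr : r1 > r2) (hr2 : r2 > 0) (he : e > 0) (hm : m > 0)
    (hq1 : q1 > 0) (hq2 : q2 > 0) (haq : aq > 0) (htrade : aq*q1 ≥ q2) :
    let L := Real.log (r1/r2)
    let s0 := (1/2) * e^2*q1*q2*r1*r2*L*(2*aq*q1*r1 + 2*q2*r2 + (q2*r2 - aq*q1*r1)*L)
    let s1 := e*m*((r1+r2)*(aq^2*q1^2*r1^2 - q2^2*r2^2)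
      - r1*r2*(aq^2*q1^2*r1 + q2^2*r2 - 3*aq*q1*q2*(r1+r2))*L)
    let s2 := 4*aq*m^2*(aq*q1 - q2)*r1*r2*(r1+r2)
    let k0 := e*q1*r1*L / (2*m*(r1+r2))
    deriv (fun k => s2*k^2 + s1*k + s0) k0 =
      e*m*(aq*q1*r1 + q2*r2)*((r1+r2)*(aq*q1*r1 - q2*r2) + (3*aq*q1 - q2)*r1*r2*L) ∧
    0 < deriv (fun k => s2*k^2 + s1*k + s0) k0 := by
  intro L s0 s1 s2 k0
  have hL : L > 0 := Real.log_pos ((one_lt_div hr2).mpr hr)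
  have hslope : deriv (fun k => s2*k^2 + s1*k + s0) k0 =
      e*m*(aq*q1*r1 + q2*r2)*((r1+r2)*(aq*q1*r1 - q2*r2) + (3*aq*q1 - q2)*r1*r2*L) := by
    rw [deriv_quadratic]
    exact slope_at_k0_eq r1 r2 e m q1 q2 aq L hm.ne' (by linarith)
  exact ⟨hslope, hslope ▸ slope_at_k0_pos r1 r2 e m q1 q2 aq L hr hr2 he hm hq1 hq2 haq htrade hL⟩
end

section
/- Let $r_1, r_2, e, m > 0$. The discriminant of the quadratic $u^2 + \frac{m[2 r_1 r_2 + e(r_1^2 + r_2^2)]}{e(r_1+r_2)} u + \frac{m^2 r_1 r_2}{e}$ equals $\frac{m^2}{e^2 (r_1+r_2)^2}\left[(r_1^2+r_2^2)^2\left(e - \frac{4 r_1^2 r_2^2}{(r_1^2+r_2^2)^2}\right)^2 + \frac{4 r_1^2 r_2^2 (r_1^2 - r_2^2)^2}{(r_1^2+r_2^2)^2}\right]$, and in particular is nonnegative. -/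
theorem stmt10 (r1 r2 e m : ℝ)
    (hr1 : r1 > 0) (hr2 : r2 > 0) (he : e > 0) (hm : m > 0) :
    (m*(2*r1*r2 + e*(r1^2+r2^2)) / (e*(r1+r2)))^2 - 4*(m^2*r1*r2/e) =
      m^2 / (e^2*(r1+r2)^2) *
        ((r1^2+r2^2)^2*(e - 4*r1^2*r2^2/(r1^2+r2^2)^2)^2
          + 4*r1^2*r2^2*(r1^2-r2^2)^2/(r1^2+r2^2)^2) ∧
    0 ≤ (m*(2*r1*r2 + e*(r1^2+r2^2)) / (e*(r1+r2)))^2 - 4*(m^2*r1*r2/e) := by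
  have he' : e ≠ 0 := ne_of_gt he
  have hs : r1 + r2 ≠ 0 := by positivity
  have hq : (r1^2 + r2^2) ≠ 0 := by positivity
  have heq : (m*(2*r1*r2 + e*(r1^2+r2^2)) / (e*(r1+r2)))^2 - 4*(m^2*r1*r2/e) =
      m^2 / (e^2*(r1+r2)^2) *
        ((r1^2+r2^2)^2*(e - 4*r1^2*r2^2/(r1^2+r2^2)^2)^2
          + 4*r1^2*r2^2*(r1^2-r2^2)^2/(r1^2+r2^2)^2) := by
    field_simp
    ring
  refine ⟨heq, ?_⟩
  rw [heq]
  positivity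
end

section
/- Let $r_1, r_2, e, m, q_2, a_q > 0$ with $r_1 \neq r_2$ and $a_q \neq q_2$. Then the characteristic polynomial $\lambda^4 + \frac{m(e q_2 r_2^2 + a_q r_1(e r_1 + 2 r_2))}{e(a_q r_1 + q_2 r_2)}\lambda^2 + \frac{a_q r_1 r_2 m^2 (a_q - q_2)(r_1 - r_2)}{e(a_q r_1 + q_2 r_2)^2}\lambda + \frac{a_q r_1 r_2 m^2 (r_1 + r_2)}{e(a_q r_1 + q_2 r_2)}$ has a complex root with strictly positive real part. -/
/-!
If no root of `z⁴ + a z² + b z + c` had positive real part, then, the roots summing to zero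
(there is no cubic term), they would all be purely imaginary. Complex conjugation then acts on
the roots as negation, so every odd elementary symmetric function of the roots is purely
imaginary; by Vieta this forces `Re b = 0`. Here `b` is real and nonzero.
-/

open Polynomial Complex

theorem Multiset.map_esymm {R S : Type*} [CommSemiring R] [CommSemiring S] (f : R →+* S)
    (s : Multiset R) (n : ℕ) : f (s.esymm n) = (s.map f).esymm n := by
  simp only [Multiset.esymm, Multiset.powersetCard_map, Multiset.map_map, map_multiset_sum,
    Function.comp_def, map_multiset_prod]

theorem Multiset.re_esymm_eq_zero_of_forall_re_eq_zero {s : Multiset ℂ}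
    (hs : ∀ z ∈ s, z.re = 0) {n : ℕ} (hn : Odd n) : (s.esymm n).re = 0 := by
  have hconj : s.map (starRingEnd ℂ) = s.map Neg.neg :=
    Multiset.map_congr rfl fun z hz => Complex.ext (by simp [hs z hz]) (by simp)
  have hesymm : starRingEnd ℂ (s.esymm n) = -s.esymm n := by
    rw [s.map_esymm, hconj, Multiset.esymm_neg, hn.neg_one_pow, neg_one_mul]
  have hre := congrArg Complex.re hesymm
  simp only [Complex.conj_re, Complex.neg_re] at hre
  linarith

theorem Polynomial.re_coeff_eq_zero_of_forall_re_root_eq_zero {p : ℂ[X]} (hp : p.Monic)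
    (h : ∀ z ∈ p.roots, z.re = 0) {k : ℕ} (hk : k ≤ p.natDegree) (hodd : Odd (p.natDegree - k)) :
    (p.coeff k).re = 0 := by
  rw [coeff_eq_esymm_roots_of_splits (IsAlgClosed.splits p) hk, hp.leadingCoeff, one_mul,
    hodd.neg_one_pow, neg_one_mul, neg_re, Multiset.re_esymm_eq_zero_of_forall_re_eq_zero h hodd,
    neg_zero]

theorem Polynomial.forall_re_root_eq_zero_of_nextCoeff_eq_zero {p : ℂ[X]} (hp : p.Monic)
    (hnext : p.nextCoeff = 0) (h : ∀ z ∈ p.roots, z.re ≤ 0) : ∀ z ∈ p.roots, z.re = 0 := by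
  have hsum : (p.roots.map fun z => -z.re).sum = 0 := by
    have hroots : p.roots.sum = 0 := by
      simpa [hnext] using (IsAlgClosed.splits p).nextCoeff_eq_neg_sum_roots_of_monic hp
    rw [Multiset.sum_map_neg, ← coe_reAddGroupHom, ← map_multiset_sum, hroots, map_zero, neg_zero]
  intro z hz
  have hle := Multiset.single_le_sum (fun x hx => by
      obtain ⟨w, hw, rfl⟩ := Multiset.mem_map.mp hx; linarith [h w hw])
    _ (Multiset.mem_map_of_mem (fun z => -z.re) hz)
  linarith [h z hz]

theorem Polynomial.exists_root_re_pos_of_nextCoeff_eq_zero {p : ℂ[X]} (hp : p.Monic)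
    (hnext : p.nextCoeff = 0) {k : ℕ} (hk : k ≤ p.natDegree) (hodd : Odd (p.natDegree - k))
    (hre : (p.coeff k).re ≠ 0) : ∃ z, p.IsRoot z ∧ 0 < z.re := by
  by_contra! hcon
  have hneg : ∀ z ∈ p.roots, z.re ≤ 0 := fun z hz => hcon z (isRoot_of_mem_roots hz)
  exact hre (re_coeff_eq_zero_of_forall_re_root_eq_zero hp
    (forall_re_root_eq_zero_of_nextCoeff_eq_zero hp hnext hneg) hk hodd)

theorem Complex.exists_re_pos_of_depressed_quartic (a b c : ℂ) (hb : b.re ≠ 0) :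
    ∃ z : ℂ, z ^ 4 + a * z ^ 2 + b * z + c = 0 ∧ 0 < z.re := by
  set p : ℂ[X] := X ^ 4 + C a * X ^ 2 + C b * X + C c
  have hdeg : p.natDegree = 4 := by unfold p; compute_degree!
  have hmonic : p.Monic := by unfold p; monicity!
  have hnext : p.nextCoeff = 0 := by
    rw [nextCoeff_of_natDegree_pos (by omega), hdeg]; unfold p; simp
  have hcoeff : p.coeff 1 = b := by unfold p; simp
  obtain ⟨z, hz, hre⟩ := exists_root_re_pos_of_nextCoeff_eq_zero hmonic hnext
    (k := 1) (by omega) (by rw [hdeg]; decide) (by rwa [hcoeff])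
  exact ⟨z, by simpa [p] using hz, hre⟩

theorem stmt14 (r1 r2 e m q2 aq : ℝ)
    (hr1 : r1 > 0) (hr2 : r2 > 0) (he : e > 0) (hm : m > 0)
    (hq2 : q2 > 0) (haq : aq > 0) (hrr : r1 ≠ r2) (haqq : aq ≠ q2) :
    let A : ℝ := m*(e*q2*r2^2 + aq*r1*(e*r1 + 2*r2)) / (e*(aq*r1 + q2*r2))
    let B : ℝ := aq*r1*r2*m^2*(aq - q2)*(r1 - r2) / (e*(aq*r1 + q2*r2)^2)
    let C : ℝ := aq*r1*r2*m^2*(r1 + r2) / (e*(aq*r1 + q2*r2))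
    ∃ z : ℂ, z^4 + (A : ℂ)*z^2 + (B : ℂ)*z + (C : ℂ) = 0 ∧ 0 < z.re := by
  intro A B C
  have hB : B ≠ 0 := by
    have : aq - q2 ≠ 0 := sub_ne_zero.mpr haqq
    have : r1 - r2 ≠ 0 := sub_ne_zero.mpr hrr
    unfold B
    positivity
  exact exists_re_pos_of_depressed_quartic _ _ _ (by rwa [ofReal_re])
end

section
/- The trace of the matrix $J = \begin{pmatrix} 0 & 0 & \frac{-r_1 a_q m}{e(r_1 a_q + r_2 q_2)} & \frac{-a_q m (r_1+r_2)^2}{e(r_1 a_q + r_2 q_2)} \\ 0 & 0 & \frac{-r_2 m}{e(r_1 a_q + r_2 q_2)} & \frac{m(r_1+r_2)^2}{e(r_1 a_q + r_2 q_2)} \\ e r_1 & e r_2 q_2 & 0 & \frac{e(a_q - q_2) m (r_1+r_2)^2}{e(r_1 a_q + r_2 q_2)} \\ \frac{r_1 r_2}{(r_1+r_2)^2} & \frac{-a_q r_1 r_2}{(r_1+r_2)^2} & 0 & 0 \end{pmatrix}$ is zero, and its determinant equals $\frac{a_q r_1 r_2 m^2 (r_1+r_2)}{e(a_q r_1 +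 q_2 r_2)}$, which is strictly positive for positive parameters. -/
theorem Matrix.det_fin_four_of_upperLeft_eq_zero {R : Type*} [CommRing R]
    (A : Matrix (Fin 4) (Fin 4) R) (h00 : A 0 0 = 0) (h01 : A 0 1 = 0) (h10 : A 1 0 = 0)
    (h11 : A 1 1 = 0) :
    A.det = (A 0 2 * A 1 3 - A 0 3 * A 1 2) * (A 2 0 * A 3 1 - A 2 1 * A 3 0) := by
  simp only [Matrix.det_succ_row_zero, Fin.sum_univ_succ, Fin.sum_univ_zero, Matrix.det_unique]
  simp [Fin.succAbove, Fin.lt_def, h00, h01, h10, h11]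
  ring

theorem stmt15 (r1 r2 e m q2 aq : ℝ)
    (hr1 : r1 > 0) (hr2 : r2 > 0) (he : e > 0) (hm : m > 0)
    (hq2 : q2 > 0) (haq : aq > 0) :
    let J : Matrix (Fin 4) (Fin 4) ℝ :=
      !![0, 0, -r1*aq*m/(e*(r1*aq + r2*q2)), -aq*m*(r1+r2)^2/(e*(r1*aq + r2*q2));
         0, 0, -r2*m/(e*(r1*aq + r2*q2)), m*(r1+r2)^2/(e*(r1*aq + r2*q2));
         e*r1, e*r2*q2, 0, e*(aq - q2)*m*(r1+r2)^2/(e*(r1*aq + r2*q2));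
         r1*r2/(r1+r2)^2, -aq*r1*r2/(r1+r2)^2, 0, 0]
    Matrix.trace J = 0 ∧
    J.det = aq*r1*r2*m^2*(r1+r2) / (e*(aq*r1 + q2*r2)) ∧
    0 < aq*r1*r2*m^2*(r1+r2) / (e*(aq*r1 + q2*r2)) := by
  intro J
  refine ⟨by simp [J, Matrix.trace, Fin.sum_univ_four], ?_, by positivity⟩
  rw [Matrix.det_fin_four_of_upperLeft_eq_zero J rfl rfl rfl rfl]
  have hK : r1*aq + r2*q2 ≠ 0 := by positivity
  simp only [J, Matrix.of_apply, Matrix.cons_val, Matrix.cons_val_zero, Matrix.cons_val_one]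
  field_simp
  ring
end
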